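/- arXiv:2409.10822 — 3 statements merged into one kernel-verified Lean document; each statement's English description precedes it below -/
import Mathlib

section
/- Let G = Sym(ℕ) act on X, let x ∈ X have a least support D (D supports x, no proper subset of D supports x, and every finite support of x contains D). If τ ∈ G fixes every element of D except exactly one, then τ·x ≠ x. -/
/-- If `D` is the least support of `x` and `τ` fixes every element of `D` except
exactly one, then `τ • x ≠ x`. -/
theorem moving_one_support_element_moves {X : Type*} [MulAction (Equiv.Perm ℕ) X]
    (x : X) (D : Finset ℕ)
    (hsupp : MulAction.Supports (Equiv.Perm ℕ) (D : Set ℕ) x)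
    (hleast : ∀ D' : Finset ℕ, MulAction.Supports (Equiv.Perm ℕ) (D' : Set ℕ) x → D ⊆ D')
    (τ : Equiv.Perm ℕ) (i : ℕ) (hi : i ∈ D) (hτi : τ i ≠ i)
    (hfix : ∀ j ∈ D, j ≠ i → τ j = j) :
    τ • x ≠ x := by
  intro hτx
  -- k := τ i is not in D
  have hkD : τ i ∉ D := by
    intro hk
    have : τ (τ i) = τ i := hfix _ hk hτi
    exact hτi (τ.injective this)
  -- D \ {i} supports x
  have hsupp' : MulAction.Supports (Equiv.Perm ℕ) ((D.erase i : Finset ℕ) : Set ℕ) x := by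
    intro σ hσ
    have hσ' : ∀ j ∈ D, j ≠ i → σ j = j := fun j hj hji =>
      hσ (by simp [hj, hji])
    by_cases hm : σ i = i
    · exact hsupp σ (fun a ha => by
        rcases eq_or_ne a i with rfl | h
        · exact hm
        · exact hσ' a ha h)
    · -- m := σ i ∉ D
      have hmD : σ i ∉ D := by
        intro hmem
        have hne : σ i ≠ i := hm
        have : σ (σ i) = σ i := hσ' _ hmem hne
        exact hm (σ.injective this)
    -- ρ = swap (τ i) (σ i) fixes D
      set ρ : Equiv.Perm ℕ := Equiv.swap (τ i) (σ i) with hρ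
      have hρfix : ∀ a ∈ D, ρ a = a := by
        intro a ha
        apply Equiv.swap_apply_of_ne_of_ne
        · exact fun h => hkD (h ▸ ha)
        · exact fun h => hmD (h ▸ ha)
      have hρx : ρ • x = x := hsupp ρ hρfix
      -- σ⁻¹ * ρ * τ fixes D pointwise
      have hcomp : ∀ a ∈ D, (σ⁻¹ * ρ * τ) a = a := by
        intro a ha
        rcases eq_or_ne a i with rfl | h
        · show σ⁻¹ (ρ (τ a)) = a
          rw [hρ, Equiv.swap_apply_left]
          exact σ.injective (by simp)
        · show σ⁻¹ (ρ (τ a)) = a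
          rw [hfix a ha h, hρfix a ha]
          exact σ.injective (by simp [hσ' a ha h])
      have := hsupp _ hcomp
      calc σ • x = σ • ((σ⁻¹ * ρ * τ) • x) := by rw [this]
        _ = ρ • τ • x := by rw [← mul_smul, ← mul_smul]; group
        _ = x := by rw [hτx, hρx]
  have := hleast _ hsupp' hi
  exact (Finset.notMem_erase i D) this
end

section
/- Let G = Sym(ℕ), A a G-alphabet, and L a G-language over A such that the quotient A*/≡_L has exactly n orbits under the induced G-action. Then every orbit of A*/≡_L contains the class [x']_L of some string x' ∈ A* with |x'| < n. -/
private lemma map_smul_map_smul {A : Type*} [MulAction (Equiv.Perm ℕ) A]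
    (a b : Equiv.Perm ℕ) (l : List A) :
    (l.map (a • ·)).map (b • ·) = l.map ((b * a) • ·) := by
  rw [List.map_map]; congr 1; funext t; exact (mul_smul b a t).symm

private lemma map_smul_inv_cancel {A : Type*} [MulAction (Equiv.Perm ℕ) A]
    (σ : Equiv.Perm ℕ) (l : List A) :
    (l.map (σ • ·)).map (σ⁻¹ • ·) = l := by
  rw [map_smul_map_smul, inv_mul_cancel]
  simp [one_smul]

/-- If `A*/≡_L` has exactly `n` orbits (witnessed by representatives `x i`, pairwise
in distinct orbits and covering all strings), then every orbit of `A*/≡_L` contains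
the class of a string of length `< n`. -/
theorem short_orbit_representatives {A : Type*} [MulAction (Equiv.Perm ℕ) A]
    (L : List A → Bool)
    (hL : ∀ (π : Equiv.Perm ℕ) (w : List A), L (w.map (π • ·)) = L w)
    (n : ℕ) (x : Fin n → List A)
    (hdistinct : ∀ i j : Fin n, i ≠ j →
      ¬ ∃ π : Equiv.Perm ℕ, ∀ z : List A, L ((x i).map (π • ·) ++ z) = L (x j ++ z))
    (hcover : ∀ w : List A, ∃ (i : Fin n) (π : Equiv.Perm ℕ),
      ∀ z : List A, L ((x i).map (π • ·) ++ z) = L (w ++ z)) :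
    ∀ w : List A, ∃ (w' : List A) (π : Equiv.Perm ℕ), w'.length < n ∧
      ∀ z : List A, L (w'.map (π • ·) ++ z) = L (w ++ z) := by
  suffices H : ∀ (m : ℕ) (w : List A), w.length = m →
      ∃ (w' : List A) (π : Equiv.Perm ℕ), w'.length < n ∧
        ∀ z : List A, L (w'.map (π • ·) ++ z) = L (w ++ z) by
    intro w; exact H w.length w rfl
  intro m
  induction m using Nat.strong_induction_on with
  | _ m ih =>
    intro w hw
    by_cases hn : w.length < n
    · exact ⟨w, 1, hn, fun z => by simp [one_smul]⟩
    push_neg at hn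
    -- key step: two prefixes among lengths 0..n lie in the same orbit
    have key : ∀ a b : ℕ, a < b → b ≤ n →
        (∃ σ : Equiv.Perm ℕ, ∀ z : List A,
          L ((w.take a).map (σ • ·) ++ z) = L (w.take b ++ z)) →
        ∃ (w' : List A) (π : Equiv.Perm ℕ), w'.length < n ∧
          ∀ z : List A, L (w'.map (π • ·) ++ z) = L (w ++ z) := by
      intro a b hab hbn ⟨σ, hσ⟩
      set w₂ : List A := (w.take a).map (σ • ·) ++ w.drop b with hw₂
      have hlen : w₂.length < m := by
        have hbm : b ≤ m := le_trans hbn (hw ▸ hn)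
        have ham : a ≤ m := le_of_lt (lt_of_lt_of_le hab hbm)
        simp only [hw₂, List.length_append, List.length_map, List.length_take,
          List.length_drop, hw]
        omega
      have hequiv : ∀ z : List A, L (w₂ ++ z) = L (w ++ z) := by
        intro z
        calc L (w₂ ++ z) = L ((w.take a).map (σ • ·) ++ (w.drop b ++ z)) := by
              rw [hw₂, List.append_assoc]
          _ = L (w.take b ++ (w.drop b ++ z)) := hσ _
          _ = L (w ++ z) := by rw [← List.append_assoc, List.take_append_drop]
        -- done
      obtain ⟨w', π, hl, heq⟩ := ih w₂.length hlen w₂ rfl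
      exact ⟨w', π, hl, fun z => (heq z).trans (hequiv z)⟩
    -- pigeonhole among the n+1 prefixes
    set f : Fin (n + 1) → Fin n := fun k => (hcover (w.take k)).choose with hf
    obtain ⟨a, b, hab, hfeq⟩ := Fintype.exists_ne_map_eq_of_card_lt f (by simp)
    -- build the orbit-equivalence between two prefixes with the same index
    have build : ∀ a b : Fin (n + 1), f a = f b →
        ∃ σ : Equiv.Perm ℕ, ∀ z : List A,
          L ((w.take (a : ℕ)).map (σ • ·) ++ z) = L (w.take (b : ℕ) ++ z) := by
      intro a b hfeq
      obtain ⟨π₁, h₁⟩ := (hcover (w.take (a : ℕ))).choose_spec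
      obtain ⟨π₂, h₂'⟩ := (hcover (w.take (b : ℕ))).choose_spec
      have h₁ : ∀ z : List A,
          L ((x (f a)).map (π₁ • ·) ++ z) = L (w.take (a : ℕ) ++ z) := h₁
      have h₂ : ∀ z : List A,
          L ((x (f b)).map (π₂ • ·) ++ z) = L (w.take (b : ℕ) ++ z) := h₂'
      rw [← hfeq] at h₂
      refine ⟨π₂ * π₁⁻¹, fun z => ?_⟩
      set σ : Equiv.Perm ℕ := π₂ * π₁⁻¹ with hσdef
      set p := w.take (a : ℕ)
      set q := w.take (b : ℕ)
      set i := f a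
      calc L (p.map (σ • ·) ++ z)
          = L ((p.map (σ • ·) ++ z).map (σ⁻¹ • ·)) := (hL σ⁻¹ _).symm
        _ = L (p ++ z.map (σ⁻¹ • ·)) := by
              rw [List.map_append, map_smul_inv_cancel]
        _ = L ((x i).map (π₁ • ·) ++ z.map (σ⁻¹ • ·)) := (h₁ _).symm
        _ = L (((x i).map (π₁ • ·) ++ z.map (σ⁻¹ • ·)).map (σ • ·)) := (hL σ _).symm
        _ = L ((x i).map (π₂ • ·) ++ z) := by
              rw [List.map_append, map_smul_map_smul, map_smul_map_smul,
                mul_inv_cancel, hσdef, inv_mul_cancel_right]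
              simp [one_smul]
        _ = L (q ++ z) := h₂ _
    rcases Ne.lt_or_gt (fun h : (a : ℕ) = (b : ℕ) => hab (Fin.ext h)) with h | h
    · exact key a b h (Nat.lt_succ_iff.mp b.isLt) (build a b hfeq)
    · exact key b a h (Nat.lt_succ_iff.mp a.isLt) (build b a hfeq.symm)
end

section
/- Let G = Sym(ℕ), let A be a G-alphabet in which every letter has least support of size at most p, and let L be a G-language over A such that A*/≡_L has n orbits. Then every element of A*/≡_L has a support of size at most (n−1)·p; i.e., the nominal dimension of A*/≡_L is at most (n−1)p. -/
section
variable {A : Type*} [MulAction (Equiv.Perm ℕ) A] (L : List A → Bool)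

private lemma aux_shift (hL : ∀ (π : Equiv.Perm ℕ) (w : List A), L (w.map (π • ·)) = L w)
    (π : Equiv.Perm ℕ) (u z : List A) :
    L (u.map (π • ·) ++ z) = L (u ++ z.map (π⁻¹ • ·)) := by
  have h : (z.map (π⁻¹ • ·)).map (π • ·) = z := by
    rw [List.map_map]
    exact (List.map_congr_left (fun c _ => smul_inv_smul π c)).trans z.map_id
  calc L (u.map (π • ·) ++ z)
      = L ((u ++ z.map (π⁻¹ • ·)).map (π • ·)) := by rw [List.map_append, h]
    _ = L (u ++ z.map (π⁻¹ • ·)) := hL _ _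

private lemma shorten (hL : ∀ (π : Equiv.Perm ℕ) (w : List A), L (w.map (π • ·)) = L w)
    (n : ℕ) (x : Fin n → List A)
    (hcover : ∀ w : List A, ∃ (i : Fin n) (π : Equiv.Perm ℕ),
      ∀ z : List A, L ((x i).map (π • ·) ++ z) = L (w ++ z)) :
    ∀ w : List A, ∃ u : List A, u.length < n ∧ ∀ z, L (u ++ z) = L (w ++ z) := by
  have main : ∀ m (w : List A), w.length ≤ m →
      ∃ u : List A, u.length < n ∧ ∀ z, L (u ++ z) = L (w ++ z) := by
    intro m
    induction m with
    | zero =>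
      intro w hw
      rcases Nat.eq_zero_or_pos n with hn | hn
      · obtain ⟨i, -⟩ := hcover []
        exact absurd i.isLt (by omega)
      · exact ⟨w, by omega, fun z => rfl⟩
    | succ m ih =>
      intro w hw
      by_cases hlen : w.length < n
      · exact ⟨w, hlen, fun z => rfl⟩
      push_neg at hlen
      -- pigeonhole over the first n+1 prefixes
      set f : Fin (n + 1) → Fin n := fun k => (hcover (w.take k)).choose with hf
      have hfs : ∀ k : Fin (n + 1), ∃ π : Equiv.Perm ℕ,
          ∀ z, L ((x (f k)).map (π • ·) ++ z) = L (w.take k ++ z) :=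
        fun k => (hcover (w.take k)).choose_spec
      obtain ⟨a, b, hab, hfab⟩ := Fintype.exists_ne_map_eq_of_card_lt f (by simp)
      have key : ∀ a b : Fin (n + 1), a < b → f a = f b →
          ∃ u : List A, u.length < n ∧ ∀ z, L (u ++ z) = L (w ++ z) := by
        intro a b hlt hfeq
        obtain ⟨π₁, hπ₁⟩ := hfs a
        obtain ⟨π₂, hπ₂⟩ := hfs b
        rw [hfeq] at hπ₁
        set σ : Equiv.Perm ℕ := π₂ * π₁⁻¹ with hσ
        have hequiv : ∀ z, L ((w.take a).map (σ • ·) ++ z) = L (w.take b ++ z) := by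
          intro z
          have e1 : L ((w.take a).map (σ • ·) ++ z) = L (w.take ↑a ++ z.map (σ⁻¹ • ·)) :=
            aux_shift L hL σ _ z
          have e2 : L (w.take ↑a ++ z.map (σ⁻¹ • ·))
              = L ((x (f b)).map (π₁ • ·) ++ z.map (σ⁻¹ • ·)) := (hπ₁ _).symm
          have e3 : L ((x (f b)).map (π₁ • ·) ++ z.map (σ⁻¹ • ·))
              = L (x (f b) ++ (z.map (σ⁻¹ • ·)).map (π₁⁻¹ • ·)) := aux_shift L hL π₁ _ _
          have e4 : (z.map (σ⁻¹ • ·)).map (π₁⁻¹ • ·) = z.map (π₂⁻¹ • ·) := by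
            rw [List.map_map]
            apply List.map_congr_left
            intro c _
            simp only [Function.comp, hσ, mul_inv_rev, inv_inv, ← mul_smul]
            congr 1
            group
          have e5 : L (x (f b) ++ z.map (π₂⁻¹ • ·))
              = L ((x (f b)).map (π₂ • ·) ++ z) := (aux_shift L hL π₂ _ _).symm
          rw [e1, e2, e3, e4, e5, hπ₂]
        set w' : List A := (w.take a).map (σ • ·) ++ w.drop b with hw'
        have hblen : (b : ℕ) ≤ w.length := le_trans (Nat.lt_succ_iff.mp b.isLt) hlen
        have hlen' : w'.length ≤ m := by
          have : w'.length = a + (w.length - b) := by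
            simp [hw', List.length_take, List.length_drop]
            omega
          omega
        have hwz : ∀ z, L (w' ++ z) = L (w ++ z) := by
          intro z
          calc L (w' ++ z) = L ((w.take a).map (σ • ·) ++ (w.drop b ++ z)) := by
                rw [hw', List.append_assoc]
            _ = L (w.take b ++ (w.drop b ++ z)) := hequiv _
            _ = L (w ++ z) := by rw [← List.append_assoc, List.take_append_drop]
        obtain ⟨u, hu1, hu2⟩ := ih w' hlen'
        exact ⟨u, hu1, fun z => (hu2 z).trans (hwz z)⟩
      rcases hab.lt_or_gt with h | h
      · exact key a b h hfab
      · exact key b a h hfab.symm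
  exact fun w => main w.length w le_rfl

end

/-- If every letter of the `G`-alphabet `A` has a support of size at most `p`, and the
quotient `A*/≡_L` has `n` orbits (witnessed by representatives), then every class of
`A*/≡_L` has a support of size at most `(n-1)·p`. -/
theorem nerode_quotient_dimension_bound {A : Type*} [MulAction (Equiv.Perm ℕ) A]
    (p : ℕ)
    (hA : ∀ a : A, ∃ D : Finset ℕ,
      MulAction.Supports (Equiv.Perm ℕ) (D : Set ℕ) a ∧ D.card ≤ p)
    (L : List A → Bool)
    (hL : ∀ (π : Equiv.Perm ℕ) (w : List A), L (w.map (π • ·)) = L w)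
    (n : ℕ) (x : Fin n → List A)
    (hdistinct : ∀ i j : Fin n, i ≠ j →
      ¬ ∃ π : Equiv.Perm ℕ, ∀ z : List A, L ((x i).map (π • ·) ++ z) = L (x j ++ z))
    (hcover : ∀ w : List A, ∃ (i : Fin n) (π : Equiv.Perm ℕ),
      ∀ z : List A, L ((x i).map (π • ·) ++ z) = L (w ++ z)) :
    ∀ w : List A, ∃ D : Finset ℕ, D.card ≤ (n - 1) * p ∧
      ∀ π : Equiv.Perm ℕ, (∀ a ∈ D, π a = a) →
        ∀ z : List A, L (w.map (π • ·) ++ z) = L (w ++ z) := by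
  classical
  intro w
  obtain ⟨u, hulen, hu⟩ := shorten L hL n x hcover w
  refine ⟨u.toFinset.biUnion (fun a => (hA a).choose), ?_, ?_⟩
  · calc (u.toFinset.biUnion (fun a => (hA a).choose)).card
        ≤ ∑ a ∈ u.toFinset, (hA a).choose.card := Finset.card_biUnion_le
      _ ≤ u.toFinset.card * p :=
          Finset.sum_le_card_nsmul _ _ p (fun a _ => (hA a).choose_spec.2)
      _ ≤ (n - 1) * p := by
          have h1 : u.toFinset.card ≤ u.length := u.toFinset_card_le
          have h2 : u.length ≤ n - 1 := by omega
          exact Nat.mul_le_mul_right p (le_trans h1 h2)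
  · intro π hπ z
    have hfix : u.map (π • ·) = u := by
      have : ∀ a ∈ u, π • a = a := by
        intro a ha
        apply (hA a).choose_spec.1
        intro s hs
        have hsD : s ∈ u.toFinset.biUnion (fun a => (hA a).choose) :=
          Finset.mem_biUnion.mpr ⟨a, List.mem_toFinset.mpr ha, hs⟩
        exact hπ s hsD
      exact (List.map_congr_left (fun a ha => this a ha)).trans u.map_id
    calc L (w.map (π • ·) ++ z) = L (w ++ z.map (π⁻¹ • ·)) := aux_shift L hL π w z
      _ = L (u ++ z.map (π⁻¹ • ·)) := (hu _).symm
      _ = L (u.map (π • ·) ++ z) := (aux_shift L hL π u z).symm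
      _ = L (u ++ z) := by rw [hfix]
      _ = L (w ++ z) := hu z
end
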